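/- arXiv:2503.11156 — 6 statements merged into one kernel-verified Lean document; each statement's English description precedes it below -/
import Mathlib

section
/- Let E be a Banach lattice and let F : E →L E be a positive bounded linear operator. Then the following are equivalent: (i) the operator I − F is bijective and its inverse is a positive bounded linear operator on E; (ii) there exists n ≥ 1 such that ‖Fⁿ‖ < 1 (equivalently, the spectral radius r(F) = limₙ ‖Fⁿ‖^{1/n} is strictly less than 1). Moreover, in this case (I − F)⁻¹ = Σ_{k=0}^∞ Fᵏ, which is a positive operator. -/
/-!
If `‖Fⁿ‖ < 1`, grouping the exponents by their residue mod `n` dominates the Neumann series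
`∑ Fᵏ` by a geometric series, and its sum is a positive two-sided inverse of `1 - F`.

Conversely, let `G ≥ 0` be a right inverse of `1 - F`. Since `∑_{j<m} Fʲ = G - Fᵐ G`, the partial
sums of the Neumann series stay below `G` on the positive cone, so `Fⁱ ≤ G` for every `i`. Writing
`Fᵏ = Fʲ Fᵏ⁻ʲ` for `j ≤ k` then gives `(k + 1) Fᵏ ≤ ∑_{j ≤ k} Fʲ G ≤ G²`, and since the operator
norm is monotone on positive operators, `‖Fᵏ‖ ≤ ‖G²‖ / (k + 1) < 1` for large `k`.
-/

open Finset

theorem summable_pow_of_norm_pow_lt_one {R : Type*} [NormedRing R] [CompleteSpace R] {x : R}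
    {n : ℕ} (hn : n ≠ 0) (h : ‖x ^ n‖ < 1) : Summable (x ^ · : ℕ → R) := by
  have : NeZero n := ⟨hn⟩
  have hgeom : Summable fun q : ℕ => ‖(x ^ n) ^ q‖ := by
    refine (summable_geometric_of_lt_one (norm_nonneg _) h).of_norm_bounded_eventually_nat ?_
    filter_upwards [eventually_norm_pow_le (x ^ n)] with q hq
    rwa [norm_norm]
  have hprod : Summable fun p : ℕ × Fin n => (x ^ n) ^ p.1 * x ^ (p.2 : ℕ) :=
    summable_mul_of_summable_norm (f := ((x ^ n) ^ ·)) (g := fun r : Fin n => x ^ (r : ℕ))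
      hgeom .of_finite
  rw [← (Nat.divModEquiv n).symm.summable_iff]
  refine hprod.congr fun p => ?_
  simp only [Function.comp_apply, Nat.divModEquiv_symm_apply, pow_add, pow_mul']

namespace ContinuousLinearMap

variable {E : Type*} [NormedAddCommGroup E] [Lattice E] [NormedSpace ℝ E]

theorem pow_apply_nonneg {F : E →L[ℝ] E} (hF : ∀ x, 0 ≤ x → 0 ≤ F x) (k : ℕ) {x : E}
    (hx : 0 ≤ x) : 0 ≤ (F ^ k) x := by
  induction k with
  | zero => simpa using hx
  | succ k ih => rw [pow_succ', mul_apply_eq_comp]; exact hF _ ih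

variable [IsOrderedAddMonoid E]

theorem abs_apply_le_apply_abs {T : E →L[ℝ] E} (hT : ∀ x, 0 ≤ x → 0 ≤ T x) (x : E) :
    |T x| ≤ T |x| := by
  have hmono : Monotone T := (monotone_iff_map_nonneg T).mpr hT
  refine abs_le'.mpr ⟨hmono (le_abs_self x), ?_⟩
  rw [← map_neg]
  exact hmono (neg_le_abs x)

theorem norm_le_norm_of_apply_le [HasSolidNorm E] {T S : E →L[ℝ] E}
    (hT : ∀ x, 0 ≤ x → 0 ≤ T x) (hTS : ∀ x, 0 ≤ x → T x ≤ S x) : ‖T‖ ≤ ‖S‖ := by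
  refine opNorm_le_bound _ (norm_nonneg S) fun x => ?_
  have hTx : 0 ≤ T |x| := hT _ (abs_nonneg x)
  have hTSx : T |x| ≤ S |x| := hTS _ (abs_nonneg x)
  calc ‖T x‖ ≤ ‖T |x|‖ := norm_le_norm_of_abs_le_abs <| by
        rw [abs_of_nonneg hTx]; exact abs_apply_le_apply_abs hT x
    _ ≤ ‖S |x|‖ := norm_le_norm_of_abs_le_abs <| by
        rwa [abs_of_nonneg hTx, abs_of_nonneg (hTx.trans hTSx)]
    _ ≤ ‖S‖ * ‖|x|‖ := S.le_opNorm _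
    _ = ‖S‖ * ‖x‖ := by rw [norm_abs_eq_norm]

theorem exists_hasSum_pow_inverse_of_norm_pow_lt_one [HasSolidNorm E] [CompleteSpace E]
    {F : E →L[ℝ] E} (hF : ∀ x, 0 ≤ x → 0 ≤ F x) {n : ℕ} (hn : n ≠ 0) (h : ‖F ^ n‖ < 1) :
    ∃ G : E →L[ℝ] E, HasSum (F ^ ·) G ∧
      (∀ x, 0 ≤ x → 0 ≤ G x) ∧ (1 - F) * G = 1 ∧ G * (1 - F) = 1 := by
  have hs := summable_pow_of_norm_pow_lt_one hn h
  refine ⟨_, hs.hasSum, fun x hx => ?_, hs.one_sub_mul_tsum_pow, hs.tsum_pow_mul_one_sub⟩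
  exact hasSum_le (fun k => pow_apply_nonneg hF k hx) hasSum_zero ((apply ℝ E x).hasSum hs.hasSum)

section RightInverse

variable {F G : E →L[ℝ] E} (hF : ∀ x, 0 ≤ x → 0 ≤ F x) (hG : ∀ x, 0 ≤ x → 0 ≤ G x)
  (hFG : (1 - F) * G = 1)
include hF hG hFG

theorem sum_range_pow_apply_le (m : ℕ) {x : E} (hx : 0 ≤ x) :
    ∑ j ∈ range m, (F ^ j) x ≤ G x := by
  have hsum : ∑ j ∈ range m, F ^ j = G - F ^ m * G :=
    calc ∑ j ∈ range m, F ^ j = (∑ j ∈ range m, F ^ j) * ((1 - F) * G) := by rw [hFG, mul_one]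
      _ = G - F ^ m * G := by rw [← mul_assoc, geom_sum_mul_neg, sub_mul, one_mul]
  rw [← _root_.sum_apply, hsum, sub_apply, mul_apply_eq_comp]
  exact sub_le_self _ (pow_apply_nonneg hF m (hG x hx))

theorem pow_apply_le (k : ℕ) {x : E} (hx : 0 ≤ x) : (F ^ k) x ≤ G x :=
  (single_le_sum (fun j _ => pow_apply_nonneg hF j hx) (self_mem_range_succ k)).trans
    (sum_range_pow_apply_le hF hG hFG (k + 1) hx)

theorem succ_nsmul_pow_apply_le (k : ℕ) {x : E} (hx : 0 ≤ x) :
    (k + 1) • (F ^ k) x ≤ G (G x) :=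
  calc (k + 1) • (F ^ k) x = ∑ j ∈ range (k + 1), (F ^ k) x := by rw [sum_const, card_range]
    _ = ∑ j ∈ range (k + 1), (F ^ j) ((F ^ (k - j)) x) := sum_congr rfl fun j hj => by
        rw [← mul_apply_eq_comp, ← pow_add, Nat.add_sub_cancel' (mem_range_succ_iff.mp hj)]
    _ ≤ ∑ j ∈ range (k + 1), (F ^ j) (G x) := sum_le_sum fun j _ =>
        (monotone_iff_map_nonneg _).mpr (fun _ => pow_apply_nonneg hF j)
          (pow_apply_le hF hG hFG (k - j) hx)
    _ ≤ G (G x) := sum_range_pow_apply_le hF hG hFG (k + 1) (hG x hx)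

theorem exists_norm_pow_lt_one_of_mul_eq_one [HasSolidNorm E] :
    ∃ n : ℕ, 1 ≤ n ∧ ‖F ^ n‖ < 1 := by
  obtain ⟨k, hk⟩ := exists_nat_gt ‖G * G‖
  have hk1 : 1 ≤ k := by exact_mod_cast (norm_nonneg _).trans_lt hk
  have hbound : ((k : ℝ) + 1) * ‖F ^ k‖ ≤ ‖G * G‖ := by
    have := norm_le_norm_of_apply_le (T := (k + 1) • F ^ k) (S := G * G)
      (fun x hx => nsmul_nonneg (pow_apply_nonneg hF k hx) _)
      (fun x hx => succ_nsmul_pow_apply_le hF hG hFG k hx)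
    rwa [← Nat.cast_smul_eq_nsmul ℝ, norm_smul, Real.norm_natCast, Nat.cast_succ] at this
  refine ⟨k, hk1, ?_⟩
  nlinarith [norm_nonneg (F ^ k)]

end RightInverse

end ContinuousLinearMap

open ContinuousLinearMap in
/-- Let `E` be a Banach lattice and `F : E →L[ℝ] E` a positive bounded
linear operator. Then `I - F` has a positive bounded inverse iff `‖Fⁿ‖ < 1` for some `n ≥ 1`
(equivalently, the spectral radius of `F` is `< 1`); and in this case
`(I - F)⁻¹ = ∑ₖ Fᵏ`, which is a positive operator. -/
theorem stmt_0 {E : Type*} [NormedAddCommGroup E] [Lattice E] [HasSolidNorm E]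
    [IsOrderedAddMonoid E] [NormedSpace ℝ E] [CompleteSpace E]
    (F : E →L[ℝ] E) (hF : ∀ x : E, 0 ≤ x → 0 ≤ F x) :
    ((∃ G : E →L[ℝ] E, (∀ x : E, 0 ≤ x → 0 ≤ G x) ∧
        (1 - F) * G = 1 ∧ G * (1 - F) = 1) ↔
      (∃ n : ℕ, 1 ≤ n ∧ ‖F ^ n‖ < 1)) ∧
    ((∃ n : ℕ, 1 ≤ n ∧ ‖F ^ n‖ < 1) →
      ∃ G : E →L[ℝ] E, HasSum (fun k : ℕ => F ^ k) G ∧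
        (∀ x : E, 0 ≤ x → 0 ≤ G x) ∧ (1 - F) * G = 1 ∧ G * (1 - F) = 1) := by
  constructor
  · constructor
    · rintro ⟨G, hG, hFG, -⟩
      exact exists_norm_pow_lt_one_of_mul_eq_one hF hG hFG
    · rintro ⟨n, hn, h⟩
      obtain ⟨G, -, hG⟩ := exists_hasSum_pow_inverse_of_norm_pow_lt_one hF (by omega) h
      exact ⟨G, hG⟩
  · rintro ⟨n, hn, h⟩
    exact exists_hasSum_pow_inverse_of_norm_pow_lt_one hF (by omega) h
end

section
/- Let V and W be Banach lattices, let S : V →L W and T : W →L V be positive bounded linear operators, and define the bounded operator M on the product Banach lattice V × W (ordered componentwise) by M(v, w) := (T w, S v). Then I − M is bijective with a positive bounded inverse if and only if I − T∘S is bijective (on V) with a positive bounded inverse, and this holds if and only if I − S∘T is bijective (on W) with a positive bounded inverse. -/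
/-!
Eliminating `y = w + S x` from `(1 - M) (x, y) = (v, w)` leaves `(1 - T S) x = v + T w`. So an
inverse `N` of `1 - T S` gives the inverse `(v, w) ↦ (N (v + T w), w + S N (v + T w))` of `1 - M`,
positive when `S`, `T` and `N` are; conversely the `V`-corner of a positive inverse of `1 - M`
inverts `1 - T S`. Passing from `T S` to `S T` is Jacobson's identity
`(1 - S T)⁻¹ = 1 + S (1 - T S)⁻¹ T`.
-/

namespace ContinuousLinearMap

variable {R E F : Type*} [Ring R]
  [TopologicalSpace E] [AddCommGroup E] [IsTopologicalAddGroup E] [Module R E]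
  [TopologicalSpace F] [AddCommGroup F] [IsTopologicalAddGroup F] [Module R F]

def HasPositiveInverse [LE E] (A : E →L[R] E) : Prop :=
  ∃ N : E →L[R] E, (∀ x, 0 ≤ x → 0 ≤ N x) ∧ A * N = 1 ∧ N * A = 1

omit [IsTopologicalAddGroup E] in
theorem mul_eq_one_iff_apply {A B : E →L[R] E} : A * B = 1 ↔ ∀ x, A (B x) = x := by
  simp [ContinuousLinearMap.ext_iff]

theorem one_sub_apply (A : E →L[R] E) (x : E) : (1 - A) x = x - A x := rfl

theorem HasPositiveInverse.one_sub_comp_comm [PartialOrder E] [PartialOrder F]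
    [IsOrderedAddMonoid F] {S : E →L[R] F} {T : F →L[R] E}
    (hS : ∀ x, 0 ≤ x → 0 ≤ S x) (hT : ∀ y, 0 ≤ y → 0 ≤ T y)
    (h : HasPositiveInverse (1 - T.comp S)) : HasPositiveInverse (1 - S.comp T) := by
  obtain ⟨N, hN, hright, hleft⟩ := h
  rw [mul_eq_one_iff_apply] at hright hleft
  refine ⟨1 + S.comp (N.comp T), fun y hy => add_nonneg hy (hS _ (hN _ (hT _ hy))), ?_, ?_⟩
  · refine mul_eq_one_iff_apply.2 fun y => ?_
    have hTy := hright (T y)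
    simp only [one_sub_apply, add_apply, one_apply_eq_self, comp_apply] at hTy ⊢
    calc y + S (N (T y)) - S (T (y + S (N (T y))))
        = y - S (T y) + S (N (T y) - T (S (N (T y)))) := by simp only [map_add, map_sub]; abel
      _ = y := by rw [hTy]; abel
  · refine mul_eq_one_iff_apply.2 fun y => ?_
    have hTy := hleft (T y)
    simp only [one_sub_apply, add_apply, one_apply_eq_self, comp_apply] at hTy ⊢
    rw [map_sub T, hTy]
    abel

theorem one_sub_antidiag_apply {S : E →L[R] F} {T : F →L[R] E} {M : E × F →L[R] E × F}
    (hM : ∀ v w, M (v, w) = (T w, S v)) (q : E × F) :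
    (1 - M) q = (q.1 - T q.2, q.2 - S q.1) := by
  rw [one_sub_apply, hM]
  rfl

theorem HasPositiveInverse.one_sub_comp_of_antidiag [PartialOrder E] [PartialOrder F]
    {S : E →L[R] F} {T : F →L[R] E} {M : E × F →L[R] E × F}
    (hM : ∀ v w, M (v, w) = (T w, S v)) (h : HasPositiveInverse (1 - M)) :
    HasPositiveInverse (1 - T.comp S) := by
  obtain ⟨P, hP, hright, hleft⟩ := h
  rw [mul_eq_one_iff_apply] at hright hleft
  refine ⟨(fst R E F).comp (P.comp (inl R E F)), fun v hv => (hP (v, 0) ⟨hv, le_rfl⟩).1, ?_, ?_⟩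
  · refine mul_eq_one_iff_apply.2 fun v => ?_
    have hq := hright (v, 0)
    set q := P (v, 0)
    rw [one_sub_antidiag_apply hM, Prod.mk.injEq, sub_eq_zero] at hq
    rw [one_sub_apply]
    simp only [comp_apply, coe_fst', inl_apply]
    rw [← hq.2, hq.1]
  · refine mul_eq_one_iff_apply.2 fun v => ?_
    have hq : ((1 - T.comp S) v, (0 : F)) = (1 - M) (v, S v) := by
      rw [one_sub_antidiag_apply hM, one_sub_apply, sub_self]
      rfl
    simp only [comp_apply, coe_fst', inl_apply]
    rw [hq, hleft]

theorem HasPositiveInverse.antidiag_of_one_sub_comp [PartialOrder E] [IsOrderedAddMonoid E]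
    [PartialOrder F] [IsOrderedAddMonoid F] {S : E →L[R] F} {T : F →L[R] E}
    {M : E × F →L[R] E × F} (hS : ∀ x, 0 ≤ x → 0 ≤ S x) (hT : ∀ y, 0 ≤ y → 0 ≤ T y)
    (hM : ∀ v w, M (v, w) = (T w, S v)) (h : HasPositiveInverse (1 - T.comp S)) :
    HasPositiveInverse (1 - M) := by
  obtain ⟨N, hN, hright, hleft⟩ := h
  rw [mul_eq_one_iff_apply] at hright hleft
  let A : E × F →L[R] E := N.comp (fst R E F + T.comp (snd R E F))
  have hA (q : E × F) : A q = N (q.1 + T q.2) := rfl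
  refine ⟨A.prod (snd R E F + S.comp A), ?_, ?_, ?_⟩
  · rintro ⟨v, w⟩ ⟨hv, hw⟩
    have hx := hN _ (add_nonneg hv (hT _ hw))
    exact ⟨hx, add_nonneg hw (hS _ hx)⟩
  · refine mul_eq_one_iff_apply.2 fun ⟨v, w⟩ => ?_
    have hvw := hright (v + T w)
    rw [one_sub_apply, comp_apply] at hvw
    rw [one_sub_antidiag_apply hM]
    simp only [prod_apply, add_apply, comp_apply, coe_snd', hA]
    ext
    · calc N (v + T w) - T (w + S (N (v + T w)))
          = N (v + T w) - T (S (N (v + T w))) - T w := by rw [map_add T]; abel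
        _ = v := by rw [hvw]; abel
    · exact add_sub_cancel_right w _
  · refine mul_eq_one_iff_apply.2 fun ⟨v, w⟩ => ?_
    have hv : v - T w + T (w - S v) = (1 - T.comp S) v := by
      rw [one_sub_apply, map_sub]; simp only [comp_apply]; abel
    rw [one_sub_antidiag_apply hM]
    simp only [prod_apply, add_apply, comp_apply, coe_snd', hA, hv, hleft]
    exact Prod.ext rfl (sub_add_cancel w _)

end ContinuousLinearMap

open ContinuousLinearMap

theorem stmt_3_general {V W : Type*}
    [NormedAddCommGroup V] [Lattice V]
    [IsOrderedAddMonoid V] [NormedSpace ℝ V]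
    [NormedAddCommGroup W] [Lattice W]
    [IsOrderedAddMonoid W] [NormedSpace ℝ W]
    (S : V →L[ℝ] W) (T : W →L[ℝ] V)
    (hS : ∀ v : V, 0 ≤ v → 0 ≤ S v) (hT : ∀ w : W, 0 ≤ w → 0 ≤ T w)
    (M : V × W →L[ℝ] V × W) (hM : ∀ (v : V) (w : W), M (v, w) = (T w, S v)) :
    ((∃ N : V × W →L[ℝ] V × W, (∀ q : V × W, 0 ≤ q → 0 ≤ N q) ∧
        (1 - M) * N = 1 ∧ N * (1 - M) = 1) ↔
      (∃ N : V →L[ℝ] V, (∀ x : V, 0 ≤ x → 0 ≤ N x) ∧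
        (1 - T.comp S) * N = 1 ∧ N * (1 - T.comp S) = 1)) ∧
    ((∃ N : V →L[ℝ] V, (∀ x : V, 0 ≤ x → 0 ≤ N x) ∧
        (1 - T.comp S) * N = 1 ∧ N * (1 - T.comp S) = 1) ↔
      (∃ N : W →L[ℝ] W, (∀ y : W, 0 ≤ y → 0 ≤ N y) ∧
        (1 - S.comp T) * N = 1 ∧ N * (1 - S.comp T) = 1)) :=
  ⟨⟨HasPositiveInverse.one_sub_comp_of_antidiag hM,
      HasPositiveInverse.antidiag_of_one_sub_comp hS hT hM⟩,
    ⟨HasPositiveInverse.one_sub_comp_comm hS hT, HasPositiveInverse.one_sub_comp_comm hT hS⟩⟩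

/-- Let `V, W` be Banach lattices, `S : V →L[ℝ] W`, `T : W →L[ℝ] V` positive,
and `M` the bounded operator on `V × W` (ordered componentwise) with `M (v, w) = (T w, S v)`.
Then `I - M` has a positive bounded inverse iff `I - T∘S` does (on `V`), iff `I - S∘T`
does (on `W`). -/
theorem stmt_3 {V W : Type*}
    [NormedAddCommGroup V] [Lattice V] [HasSolidNorm V]
    [IsOrderedAddMonoid V] [NormedSpace ℝ V] [CompleteSpace V]
    [NormedAddCommGroup W] [Lattice W] [HasSolidNorm W]
    [IsOrderedAddMonoid W] [NormedSpace ℝ W] [CompleteSpace W]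
    (S : V →L[ℝ] W) (T : W →L[ℝ] V)
    (hS : ∀ v : V, 0 ≤ v → 0 ≤ S v) (hT : ∀ w : W, 0 ≤ w → 0 ≤ T w)
    (M : V × W →L[ℝ] V × W) (hM : ∀ (v : V) (w : W), M (v, w) = (T w, S v)) :
    ((∃ N : V × W →L[ℝ] V × W, (∀ q : V × W, 0 ≤ q → 0 ≤ N q) ∧
        (1 - M) * N = 1 ∧ N * (1 - M) = 1) ↔
      (∃ N : V →L[ℝ] V, (∀ x : V, 0 ≤ x → 0 ≤ N x) ∧
        (1 - T.comp S) * N = 1 ∧ N * (1 - T.comp S) = 1)) ∧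
    ((∃ N : V →L[ℝ] V, (∀ x : V, 0 ≤ x → 0 ≤ N x) ∧
        (1 - T.comp S) * N = 1 ∧ N * (1 - T.comp S) = 1) ↔
      (∃ N : W →L[ℝ] W, (∀ y : W, 0 ≤ y → 0 ≤ N y) ∧
        (1 - S.comp T) * N = 1 ∧ N * (1 - S.comp T) = 1)) :=
  stmt_3_general S T hS hT M hM
end

section
/- Let E and F be Banach lattices and let (Kₙ)_{n∈ℕ} be a sequence of positive bounded linear operators from E to F that is decreasing on the positive cone: 0 ≤ K_{n+1} x ≤ Kₙ x for every x ≥ 0 and every n. Suppose that for every x ≥ 0 the sequence (Kₙ x) converges weakly to 0, i.e., φ(Kₙ x) → 0 for every continuous linear functional φ on F. Then for every x ∈ E (not just positive x) one has ‖Kₙ x‖ → 0. -/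
/-!
By Mazur's lemma, a weakly null sequence `yₙ` has `0` in the norm closure of the convex hull of
its range. When `yₙ` is decreasing, every element `z` of that convex hull eventually dominates
`yₙ`, so for `yₙ ≥ 0` solidity of the norm gives `‖yₙ‖ ≤ ‖z‖` for large `n`: this is Dini's
theorem. Applied to `Kₙ x⁺` and `Kₙ x⁻` it yields `‖Kₙ x‖ → 0`.
-/

open Filter Topology

section OrderedModule

variable {F : Type*} [AddCommGroup F] [Lattice F] [IsOrderedAddMonoid F] [Module ℝ F]

lemma inv_two_pow_smul_nonneg {v : F} (hv : 0 ≤ v) (k : ℕ) : 0 ≤ ((2 : ℝ) ^ k)⁻¹ • v := by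
  induction k with
  | zero => simpa using hv
  | succ k ih =>
    apply nsmul_two_semiclosed
    have hhalf : ((2 : ℕ) : ℝ) * ((2 : ℝ) ^ (k + 1))⁻¹ = ((2 : ℝ) ^ k)⁻¹ := by
      rw [pow_succ]; field_simp; norm_num
    rwa [← Nat.cast_smul_eq_nsmul ℝ, smul_smul, hhalf]

/-- Nonnegative dyadic scalars preserve the cone because `2 • w ≥ 0` forces `w ≥ 0` in a
lattice-ordered group; the dyadics are dense in `[0, ∞)` and the cone is closed. -/
lemma posSMulMono_of_continuousSMul [TopologicalSpace F] [ClosedIciTopology F]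
    [ContinuousSMul ℝ F] : PosSMulMono ℝ F := by
  refine PosSMulMono.of_smul_nonneg fun c hc v hv => ?_
  have hclosed : IsClosed {a : ℝ | 0 ≤ a • v} :=
    isClosed_Ici.preimage (continuous_id.smul continuous_const)
  have hdyadic : ∀ k : ℕ, 0 ≤ ((⌊c * 2 ^ k⌋₊ : ℝ) / 2 ^ k) • v := fun k => by
    rw [div_eq_mul_inv, mul_smul, Nat.cast_smul_eq_nsmul]
    exact nsmul_nonneg (inv_two_pow_smul_nonneg hv k) _
  have hlim : Tendsto (fun k : ℕ => (⌊c * 2 ^ k⌋₊ : ℝ) / 2 ^ k) atTop (𝓝 c) :=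
    (tendsto_nat_floor_mul_div_atTop hc).comp (tendsto_pow_atTop_atTop_of_one_lt one_lt_two)
  exact hclosed.mem_of_tendsto hlim (Eventually.of_forall hdyadic)

end OrderedModule

lemma convex_setOf_eventually_le {ι F : Type*} [AddCommGroup F] [PartialOrder F]
    [IsOrderedAddMonoid F] [Module ℝ F] [PosSMulMono ℝ F] (l : Filter ι) (y : ι → F) :
    Convex ℝ {z | ∀ᶠ i in l, y i ≤ z} := by
  intro z₁ h₁ z₂ h₂ a b ha hb hab
  filter_upwards [h₁, h₂] with i hi₁ hi₂
  calc y i = a • y i + b • y i := by rw [← add_smul, hab, one_smul]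
    _ ≤ a • z₁ + b • z₂ :=
      add_le_add (smul_le_smul_of_nonneg_left hi₁ ha) (smul_le_smul_of_nonneg_left hi₂ hb)

lemma Antitone.eventually_le_of_mem_convexHull {F : Type*} [AddCommGroup F] [PartialOrder F]
    [IsOrderedAddMonoid F] [Module ℝ F] [PosSMulMono ℝ F] {y : ℕ → F} (hy : Antitone y) {z : F}
    (hz : z ∈ convexHull ℝ (Set.range y)) : ∀ᶠ n in atTop, y n ≤ z := by
  refine convexHull_min ?_ (convex_setOf_eventually_le atTop y) hz
  rintro _ ⟨m, rfl⟩
  exact eventually_atTop.2 ⟨m, fun n hn => hy hn⟩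

lemma zero_mem_closure_convexHull_range {F : Type*} [NormedAddCommGroup F] [NormedSpace ℝ F]
    {ι : Type*} {l : Filter ι} [l.NeBot] {y : ι → F}
    (hweak : ∀ φ : StrongDual ℝ F, Tendsto (fun i => φ (y i)) l (𝓝 0)) :
    (0 : F) ∈ closure (convexHull ℝ (Set.range y)) := by
  by_contra h
  obtain ⟨φ, u, hφ0, hφu⟩ := geometric_hahn_banach_point_closed
    (convex_convexHull ℝ _).closure isClosed_closure h
  rw [map_zero] at hφ0
  obtain ⟨i, hi⟩ := ((hweak φ).eventually (eventually_lt_nhds hφ0)).exists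
  exact (hφu _ (subset_closure (subset_convexHull ℝ _ ⟨i, rfl⟩))).not_gt hi

lemma Antitone.tendsto_zero_of_dual_tendsto_zero {F : Type*} [NormedAddCommGroup F] [Lattice F]
    [HasSolidNorm F] [IsOrderedAddMonoid F] [NormedSpace ℝ F] {y : ℕ → F} (hy : Antitone y)
    (hnonneg : ∀ n, 0 ≤ y n)
    (hweak : ∀ φ : StrongDual ℝ F, Tendsto (fun n => φ (y n)) atTop (𝓝 0)) :
    Tendsto y atTop (𝓝 0) := by
  have := posSMulMono_of_continuousSMul (F := F)
  refine Metric.nhds_basis_ball.tendsto_right_iff.2 fun ε hε => ?_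
  obtain ⟨z, hz, hzε⟩ := Metric.mem_closure_iff.1 (zero_mem_closure_convexHull_range hweak) ε hε
  rw [dist_zero_left] at hzε
  filter_upwards [hy.eventually_le_of_mem_convexHull hz] with n hn
  rw [mem_ball_zero_iff]
  refine (norm_le_norm_of_abs_le_abs ?_).trans_lt hzε
  rw [abs_of_nonneg (hnonneg n)]
  exact hn.trans (le_abs_self z)

theorem stmt_7_general {E F : Type*}
    [NormedAddCommGroup E] [Lattice E] [IsOrderedAddMonoid E] [NormedSpace ℝ E]
    [NormedAddCommGroup F] [Lattice F] [HasSolidNorm F] [IsOrderedAddMonoid F] [NormedSpace ℝ F]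
    (K : ℕ → E →L[ℝ] F)
    (hpos : ∀ n : ℕ, ∀ x : E, 0 ≤ x → 0 ≤ K n x)
    (hdec : ∀ n : ℕ, ∀ x : E, 0 ≤ x → K (n + 1) x ≤ K n x)
    (hweak : ∀ x : E, 0 ≤ x → ∀ φ : F →L[ℝ] ℝ, Tendsto (fun n => φ (K n x)) atTop (𝓝 0)) :
    ∀ x : E, Tendsto (fun n => ‖K n x‖) atTop (𝓝 0) := by
  have hcone : ∀ x : E, 0 ≤ x → Tendsto (fun n => K n x) atTop (𝓝 0) := fun x hx =>
    Antitone.tendsto_zero_of_dual_tendsto_zero (antitone_nat_of_succ_le fun n => hdec n x hx)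
      (fun n => hpos n x hx) (hweak x hx)
  intro x
  have hdiff := (hcone x⁺ (posPart_nonneg x)).sub (hcone x⁻ (negPart_nonneg x))
  simp only [← map_sub, posPart_sub_negPart, sub_zero] at hdiff
  exact tendsto_zero_iff_norm_tendsto_zero.1 hdiff

/-- Let `E, F` be Banach lattices and `(Kₙ)` a sequence of positive bounded
operators `E →L[ℝ] F`, decreasing on the positive cone, such that `Kₙ x → 0` weakly for every
`x ≥ 0`. Then `‖Kₙ x‖ → 0` for every `x ∈ E`. -/
theorem stmt_7 {E F : Type*}
    [NormedAddCommGroup E] [Lattice E] [HasSolidNorm E] [IsOrderedAddMonoid E] [NormedSpace ℝ E] [CompleteSpace E]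
    [NormedAddCommGroup F] [Lattice F] [HasSolidNorm F] [IsOrderedAddMonoid F] [NormedSpace ℝ F] [CompleteSpace F]
    (K : ℕ → E →L[ℝ] F)
    (hpos : ∀ n : ℕ, ∀ x : E, 0 ≤ x → 0 ≤ K n x)
    (hdec : ∀ n : ℕ, ∀ x : E, 0 ≤ x → K (n + 1) x ≤ K n x)
    (hweak : ∀ x : E, 0 ≤ x → ∀ φ : F →L[ℝ] ℝ, Tendsto (fun n => φ (K n x)) atTop (𝓝 0)) :
    ∀ x : E, Tendsto (fun n => ‖K n x‖) atTop (𝓝 0) :=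
  stmt_7_general K hpos hdec hweak
end

section
/- Let ℓ > 0, 0 < ν ≤ v*, k* ≥ 0, and let v, k : ℝ → ℝ be measurable with ν ≤ v(x) ≤ v* and |k(x)| ≤ k* for a.e. x ∈ [0, ℓ]. Define τ(x) := ∫₀ˣ 1/v(s) ds and ξ(x) := ∫₀ˣ k(s)/v(s) ds. Then for every real p ≥ 1, every measurable g : ℝ → ℝ, and every t ≥ 0: ∫_{{x ∈ [0,ℓ] : τ(x) ≤ t}} e^{p ξ(x)} |g(t − τ(x))|^p dx ≤ v* · e^{p ℓ k*/ν} · ∫₀ᵗ |g(s)|^p ds (the integrals being Lebesgue integrals of nonnegative measurable functions, with values in [0, ∞]). -/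
open MeasureTheory Set

private lemma lintegral_image_deriv {s : Set ℝ} {f f' : ℝ → ℝ}
    (hs : MeasurableSet s) (hf' : ∀ x ∈ s, HasDerivWithinAt f (f' x) s x)
    (hf : Set.InjOn f s) (g : ℝ → ENNReal) :
    ∫⁻ x in f '' s, g x = ∫⁻ x in s, ENNReal.ofReal |f' x| * g (f x) := by
  simpa only [ContinuousLinearMap.det_toSpanSingleton] using
    lintegral_image_eq_lintegral_abs_det_fderiv_mul volume hs
      (fun x hx => (hf' x hx).hasFDerivWithinAt) hf g

/-- With `τ x = ∫₀ˣ 1/v`, `ξ x = ∫₀ˣ k/v`, `ν ≤ v ≤ v*` and `|k| ≤ k*` a.e.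
on `[0, ℓ]`, for every `p ≥ 1`, measurable `g` and `t ≥ 0`:
`∫_{x ∈ [0,ℓ], τ x ≤ t} e^{pξ(x)} |g(t - τ x)|^p dx ≤ v* e^{pℓk*/ν} ∫₀ᵗ |g|^p`. -/
theorem stmt_9 (ℓ ν vs ks : ℝ) (hℓ : 0 < ℓ) (hν : 0 < ν) (hνvs : ν ≤ vs) (hks : 0 ≤ ks)
    (v k : ℝ → ℝ) (hv : Measurable v) (hk : Measurable k)
    (hvb : ∀ᵐ x ∂(volume.restrict (Set.Icc 0 ℓ)), ν ≤ v x ∧ v x ≤ vs)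
    (hkb : ∀ᵐ x ∂(volume.restrict (Set.Icc 0 ℓ)), |k x| ≤ ks)
    (τ ξ : ℝ → ℝ)
    (hτ : ∀ x : ℝ, τ x = ∫ s in (0 : ℝ)..x, 1 / v s)
    (hξ : ∀ x : ℝ, ξ x = ∫ s in (0 : ℝ)..x, k s / v s)
    (p : ℝ) (hp : 1 ≤ p) (g : ℝ → ℝ) (hg : Measurable g) (t : ℝ) (ht : 0 ≤ t) :
    ∫⁻ x in {x | x ∈ Set.Icc 0 ℓ ∧ τ x ≤ t},
        ENNReal.ofReal (Real.exp (p * ξ x) * |g (t - τ x)| ^ p)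
      ≤ ENNReal.ofReal (vs * Real.exp (p * ℓ * ks / ν)) *
        ∫⁻ s in Set.Icc (0 : ℝ) t, ENNReal.ofReal (|g s| ^ p) := by
  have hvs : 0 < vs := lt_of_lt_of_le hν hνvs
  -- truncated velocity
  set w : ℝ → ℝ := fun x => max ν (min (v x) vs) with hwdef
  have hwm : Measurable w := measurable_const.max (hv.min measurable_const)
  have hwlb : ∀ x, ν ≤ w x := fun x => le_max_left _ _
  have hwub : ∀ x, w x ≤ vs := fun x => max_le hνvs (min_le_right _ _)
  have hwpos : ∀ x, 0 < w x := fun x => lt_of_lt_of_le hν (hwlb x)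
  -- interval integrability of 1/w
  have hIw : ∀ a b : ℝ, IntervalIntegrable (fun s => 1 / w s) volume a b := by
    intro a b
    rw [intervalIntegrable_iff]
    refine Measure.integrableOn_of_bounded (M := 1 / ν) measure_Ioc_lt_top.ne
      (measurable_const.div hwm).aestronglyMeasurable (ae_of_all _ fun s => ?_)
    rw [Real.norm_eq_abs, abs_of_nonneg (le_of_lt (div_pos one_pos (hwpos s)))]
    exact one_div_le_one_div_of_le hν (hwlb s)
  set T : ℝ → ℝ := fun x => ∫ s in (0:ℝ)..x, 1 / w s with hTdef
  have hTsub : ∀ a b : ℝ, T b - T a = ∫ s in a..b, 1 / w s := fun a b =>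
    intervalIntegral.integral_interval_sub_left (hIw 0 b) (hIw 0 a)
  have hT0 : T 0 = 0 := intervalIntegral.integral_same
  have hTlb : ∀ a b : ℝ, a ≤ b → (b - a) / vs ≤ T b - T a := by
    intro a b hab
    rw [hTsub]
    calc (b - a) / vs = ∫ _ in a..b, (1 / vs : ℝ) := by
          rw [intervalIntegral.integral_const, smul_eq_mul, mul_one_div]
      _ ≤ ∫ s in a..b, 1 / w s :=
          intervalIntegral.integral_mono_on hab intervalIntegrable_const (hIw a b)
            fun x _ => one_div_le_one_div_of_le (hwpos x) (hwub x)
  have hTub : ∀ a b : ℝ, a ≤ b → T b - T a ≤ (b - a) / ν := by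
    intro a b hab
    rw [hTsub]
    calc (∫ s in a..b, 1 / w s) ≤ ∫ _ in a..b, (1 / ν : ℝ) :=
          intervalIntegral.integral_mono_on hab (hIw a b) intervalIntegrable_const
            fun x _ => one_div_le_one_div_of_le hν (hwlb x)
      _ = (b - a) / ν := by rw [intervalIntegral.integral_const, smul_eq_mul, mul_one_div]
  have hlipkey : ∀ a b : ℝ, a ≤ b → |T b - T a| ≤ (1 / ν) * |b - a| := by
    intro a b hab
    have h1 := hTlb a b hab
    have h2 := hTub a b hab
    have h3 : 0 ≤ (b - a) / vs := div_nonneg (by linarith) hvs.le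
    have h4 : (b - a) / ν = 1 / ν * (b - a) := by ring
    rw [abs_of_nonneg (by linarith), abs_of_nonneg (by linarith : (0:ℝ) ≤ b - a)]
    linarith
  have hlip : LipschitzWith ⟨1 / ν, by positivity⟩ T := by
    refine LipschitzWith.of_dist_le_mul fun x y => ?_
    rw [Real.dist_eq, Real.dist_eq]
    rcases le_total x y with h | h
    · rw [abs_sub_comm (T x) (T y), abs_sub_comm x y]
      exact hlipkey x y h
    · exact hlipkey y x h
  have hTmono : StrictMono T := by
    intro x y hxy
    have h1 := hTlb x y hxy.le
    have h2 : 0 < (y - x) / vs := div_pos (by linarith) hvs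
    linarith
  have hTcont : Continuous T := hlip.continuous
  -- Rademacher
  have hdiff : ∀ᵐ x : ℝ, DifferentiableAt ℝ T x := hlip.ae_differentiableAt
  -- derivative lower bound
  have hderivlb : ∀ x : ℝ, DifferentiableAt ℝ T x → 1 / vs ≤ deriv T x := by
    intro x hx
    have h1 : Filter.Tendsto (slope T x) (nhdsWithin x (Set.Ioi x)) (nhds (deriv T x)) :=
      (hasDerivAt_iff_tendsto_slope.1 hx.hasDerivAt).mono_left
        (nhdsWithin_mono x fun y hy => Set.mem_compl_singleton_iff.mpr (ne_of_gt hy))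
    refine ge_of_tendsto h1 ?_
    filter_upwards [self_mem_nhdsWithin] with y hy
    have hxy : x < y := hy
    have hd : (0:ℝ) < y - x := by linarith
    rw [slope_def_field, le_div_iff₀ hd]
    have h2 := hTlb x y hxy.le
    have h3 : (y - x) / vs = 1 / vs * (y - x) := by ring
    linarith
  -- τ = T and ξ bound on [0, ℓ]
  have hvae : ∀ᵐ s : ℝ, s ∈ Icc 0 ℓ → (ν ≤ v s ∧ v s ≤ vs) :=
    (ae_restrict_iff' measurableSet_Icc).1 hvb
  have hkae : ∀ᵐ s : ℝ, s ∈ Icc 0 ℓ → |k s| ≤ ks :=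
    (ae_restrict_iff' measurableSet_Icc).1 hkb
  have hweq : ∀ᵐ s : ℝ, s ∈ Icc 0 ℓ → w s = v s := by
    filter_upwards [hvae] with s hs hmem
    obtain ⟨h1, h2⟩ := hs hmem
    rw [hwdef]
    simp only [min_eq_left h2, max_eq_right h1]
  have hτT : ∀ x ∈ Icc (0:ℝ) ℓ, τ x = T x := by
    intro x hx
    rw [hτ x, hTdef]
    refine intervalIntegral.integral_congr_ae ?_
    filter_upwards [hweq] with s hs hmem
    have hsx : s ∈ Icc (0:ℝ) ℓ := by
      rw [Set.uIoc_of_le hx.1] at hmem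
      exact ⟨hmem.1.le, hmem.2.trans hx.2⟩
    rw [hs hsx]
  have hξb : ∀ x ∈ Icc (0:ℝ) ℓ, ξ x ≤ ℓ * ks / ν := by
    intro x hx
    obtain ⟨hx0, hxl⟩ := hx
    have hint : IntervalIntegrable (fun s => k s / v s) volume 0 x := by
      rw [intervalIntegrable_iff]
      refine Measure.integrableOn_of_bounded (M := ks / ν) measure_Ioc_lt_top.ne
        (hk.div hv).aestronglyMeasurable ?_
      filter_upwards [ae_restrict_of_ae hvae, ae_restrict_of_ae hkae,
        ae_restrict_mem measurableSet_uIoc] with a h1 h2 ha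
      have haIcc : a ∈ Icc (0:ℝ) ℓ := by
        rw [Set.uIoc_of_le hx0] at ha
        exact ⟨ha.1.le, ha.2.trans hxl⟩
      obtain ⟨hv1, _⟩ := h1 haIcc
      have hva : 0 < v a := lt_of_lt_of_le hν hv1
      rw [Real.norm_eq_abs, abs_div, abs_of_pos hva]
      exact div_le_div₀ hks (h2 haIcc) hν hv1
    have hmono : ξ x ≤ ∫ _ in (0:ℝ)..x, (ks / ν : ℝ) := by
      rw [hξ x]
      refine intervalIntegral.integral_mono_ae_restrict hx0 hint intervalIntegrable_const ?_
      filter_upwards [ae_restrict_of_ae hvae, ae_restrict_of_ae hkae,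
        ae_restrict_mem measurableSet_Icc] with a h1 h2 ha
      have haIcc : a ∈ Icc (0:ℝ) ℓ := ⟨ha.1, ha.2.trans hxl⟩
      obtain ⟨hv1, _⟩ := h1 haIcc
      have hva : 0 < v a := lt_of_lt_of_le hν hv1
      calc k a / v a ≤ |k a / v a| := le_abs_self _
        _ = |k a| / v a := by rw [abs_div, abs_of_pos hva]
        _ ≤ ks / ν := div_le_div₀ hks (h2 haIcc) hν hv1
    have hconst : (∫ _ in (0:ℝ)..x, (ks / ν : ℝ)) = x * (ks / ν) := by
      rw [intervalIntegral.integral_const, smul_eq_mul, sub_zero]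
    have hfin : x * (ks / ν) ≤ ℓ * ks / ν := by
      have := mul_le_mul_of_nonneg_right hxl (div_nonneg hks hν.le)
      calc x * (ks / ν) ≤ ℓ * (ks / ν) := this
        _ = ℓ * ks / ν := by ring
    linarith [hmono, hconst ▸ hmono]
  -- the set in question
  set SS : Set ℝ := Icc 0 ℓ ∩ T ⁻¹' (Iic t) with hSSdef
  have hSSm : MeasurableSet SS := measurableSet_Icc.inter (hTcont.measurable measurableSet_Iic)
  have hseteq : {x : ℝ | x ∈ Set.Icc 0 ℓ ∧ τ x ≤ t} = SS := by
    ext x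
    simp only [hSSdef, Set.mem_setOf_eq, Set.mem_inter_iff, Set.mem_preimage, Set.mem_Iic]
    constructor
    · rintro ⟨h1, h2⟩; exact ⟨h1, by rw [← hτT x h1]; exact h2⟩
    · rintro ⟨h1, h2⟩; exact ⟨h1, by rw [hτT x h1]; exact h2⟩
  -- the target function
  set h : ℝ → ENNReal := fun u => ENNReal.ofReal (|g (t - u)| ^ p) with hhdef
  have hgm : Measurable fun s : ℝ => ENNReal.ofReal (|g s| ^ p) := by fun_prop
  have hhm : Measurable h := by
    rw [hhdef]; exact hgm.comp (measurable_const.sub measurable_id)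
  have habsnn : ∀ s : ℝ, 0 ≤ |g s| ^ p := fun s => Real.rpow_nonneg (abs_nonneg _) _
  set C : ℝ := Real.exp (p * ℓ * ks / ν) with hCdef
  have hC0 : 0 ≤ C := Real.exp_nonneg _
  -- Step A
  have stepA : ∫⁻ x in {x : ℝ | x ∈ Set.Icc 0 ℓ ∧ τ x ≤ t},
      ENNReal.ofReal (Real.exp (p * ξ x) * |g (t - τ x)| ^ p)
      ≤ ENNReal.ofReal C * ∫⁻ x in SS, h (T x) := by
    rw [hseteq]
    have step1 : ∫⁻ x in SS, ENNReal.ofReal (Real.exp (p * ξ x) * |g (t - τ x)| ^ p)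
        ≤ ∫⁻ x in SS, ENNReal.ofReal C * h (T x) := by
      refine setLIntegral_mono' hSSm fun x hx => ?_
      have hxI : x ∈ Icc (0:ℝ) ℓ := hx.1
      have hTx : τ x = T x := hτT x hxI
      have hexp : Real.exp (p * ξ x) ≤ C := by
        rw [hCdef]
        apply Real.exp_le_exp.2
        have h1 := mul_le_mul_of_nonneg_left (hξb x hxI) (by linarith : (0:ℝ) ≤ p)
        have h2 : p * (ℓ * ks / ν) = p * ℓ * ks / ν := by ring
        linarith
      calc ENNReal.ofReal (Real.exp (p * ξ x) * |g (t - τ x)| ^ p)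
          ≤ ENNReal.ofReal (C * |g (t - τ x)| ^ p) :=
            ENNReal.ofReal_le_ofReal (mul_le_mul_of_nonneg_right hexp (habsnn _))
        _ = ENNReal.ofReal C * ENNReal.ofReal (|g (t - τ x)| ^ p) := ENNReal.ofReal_mul hC0
        _ = ENNReal.ofReal C * h (T x) := by rw [hhdef, hTx]
    calc ∫⁻ x in SS, ENNReal.ofReal (Real.exp (p * ξ x) * |g (t - τ x)| ^ p)
        ≤ ∫⁻ x in SS, ENNReal.ofReal C * h (T x) := step1
      _ = ENNReal.ofReal C * ∫⁻ x in SS, h (T x) :=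
          lintegral_const_mul _ (hhm.comp hTcont.measurable)
  -- Step B
  set D : Set ℝ := {x | DifferentiableAt ℝ T x} with hDdef
  have hDm : MeasurableSet D := measurableSet_of_differentiableAt ℝ T
  have hsm : MeasurableSet (SS ∩ D) := hSSm.inter hDm
  have hae : (SS ∩ D : Set ℝ) =ᵐ[volume] SS := by
    rw [Filter.eventuallyEq_set]
    filter_upwards [hdiff] with x hx
    exact ⟨fun h' => h'.1, fun h' => ⟨h', hx⟩⟩
  have hfd : ∀ x ∈ SS ∩ D, HasDerivWithinAt T (deriv T x) (SS ∩ D) x :=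
    fun x hx => (hx.2.hasDerivAt).hasDerivWithinAt
  have hinj : Set.InjOn T (SS ∩ D) := hTmono.injective.injOn
  have himg : T '' (SS ∩ D) ⊆ Icc 0 t := by
    rintro _ ⟨x, hx, rfl⟩
    obtain ⟨⟨hx0l, hxt⟩, _⟩ := hx
    refine ⟨?_, hxt⟩
    have := hTlb 0 x hx0l.1
    have h0 : (0:ℝ) ≤ (x - 0) / vs := div_nonneg (by linarith [hx0l.1]) hvs.le
    linarith [hT0]
  have stepB : ∫⁻ x in SS, h (T x) ≤ ENNReal.ofReal vs * ∫⁻ u in Icc (0:ℝ) t, h u := by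
    have e1 : ∫⁻ x in SS, h (T x) = ∫⁻ x in SS ∩ D, h (T x) := (setLIntegral_congr hae).symm
    have e2 : ∫⁻ x in SS ∩ D, h (T x)
        ≤ ∫⁻ x in SS ∩ D, ENNReal.ofReal vs * (ENNReal.ofReal |deriv T x| * h (T x)) := by
      refine setLIntegral_mono' hsm fun x hx => ?_
      have hd : 1 / vs ≤ deriv T x := hderivlb x hx.2
      have h2 : (1:ENNReal) ≤ ENNReal.ofReal vs * ENNReal.ofReal |deriv T x| := by
        rw [← ENNReal.ofReal_mul hvs.le, ← ENNReal.ofReal_one]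
        apply ENNReal.ofReal_le_ofReal
        have habsd : 1 / vs ≤ |deriv T x| := le_trans hd (le_abs_self _)
        calc (1:ℝ) = vs * (1 / vs) := by field_simp
          _ ≤ vs * |deriv T x| := mul_le_mul_of_nonneg_left habsd hvs.le
      calc h (T x) = 1 * h (T x) := (one_mul _).symm
        _ ≤ ENNReal.ofReal vs * ENNReal.ofReal |deriv T x| * h (T x) :=
            mul_le_mul_left h2 _
        _ = ENNReal.ofReal vs * (ENNReal.ofReal |deriv T x| * h (T x)) := mul_assoc _ _ _
    have e3 : ∫⁻ x in SS ∩ D, ENNReal.ofReal vs * (ENNReal.ofReal |deriv T x| * h (T x))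
        = ENNReal.ofReal vs * ∫⁻ x in SS ∩ D, ENNReal.ofReal |deriv T x| * h (T x) :=
      lintegral_const_mul _ (((measurable_deriv T).abs.ennreal_ofReal).mul
        (hhm.comp hTcont.measurable))
    have e4 : ∫⁻ x in SS ∩ D, ENNReal.ofReal |deriv T x| * h (T x)
        = ∫⁻ u in T '' (SS ∩ D), h u := (lintegral_image_deriv hsm hfd hinj h).symm
    have e5 : ∫⁻ u in T '' (SS ∩ D), h u ≤ ∫⁻ u in Icc (0:ℝ) t, h u :=
      lintegral_mono_set himg
    calc ∫⁻ x in SS, h (T x) = ∫⁻ x in SS ∩ D, h (T x) := e1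
      _ ≤ ∫⁻ x in SS ∩ D, ENNReal.ofReal vs * (ENNReal.ofReal |deriv T x| * h (T x)) := e2
      _ = ENNReal.ofReal vs * ∫⁻ x in SS ∩ D, ENNReal.ofReal |deriv T x| * h (T x) := e3
      _ = ENNReal.ofReal vs * ∫⁻ u in T '' (SS ∩ D), h u := by rw [e4]
      _ ≤ ENNReal.ofReal vs * ∫⁻ u in Icc (0:ℝ) t, h u := mul_le_mul_right e5 _
  -- Step C: reflection
  have stepC : ∫⁻ u in Icc (0:ℝ) t, h u = ∫⁻ s in Icc (0:ℝ) t, ENNReal.ofReal (|g s| ^ p) := by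
    have hpre : (fun u : ℝ => t - u) ⁻¹' (Icc 0 t) = Icc (0:ℝ) t := by
      ext u
      simp only [Set.mem_preimage, Set.mem_Icc]
      constructor
      · rintro ⟨h1, h2⟩; constructor <;> linarith
      · rintro ⟨h1, h2⟩; constructor <;> linarith
    have hmp : MeasurePreserving (fun u : ℝ => t - u) volume volume :=
      Measure.measurePreserving_sub_left volume t
    have hemb : MeasurableEmbedding (fun u : ℝ => t - u) :=
      (MeasurableEquiv.subLeft t).measurableEmbedding
    calc ∫⁻ u in Icc (0:ℝ) t, h u
        = ∫⁻ u in (fun u : ℝ => t - u) ⁻¹' (Icc 0 t),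
            ENNReal.ofReal (|g (t - u)| ^ p) := by rw [hpre]
      _ = ∫⁻ s in Icc (0:ℝ) t, ENNReal.ofReal (|g s| ^ p) :=
          hmp.setLIntegral_comp_preimage_emb hemb (fun s => ENNReal.ofReal (|g s| ^ p)) (Icc 0 t)
  -- chain it all together
  calc ∫⁻ x in {x : ℝ | x ∈ Set.Icc 0 ℓ ∧ τ x ≤ t},
        ENNReal.ofReal (Real.exp (p * ξ x) * |g (t - τ x)| ^ p)
      ≤ ENNReal.ofReal C * ∫⁻ x in SS, h (T x) := stepA
    _ ≤ ENNReal.ofReal C * (ENNReal.ofReal vs * ∫⁻ u in Icc (0:ℝ) t, h u) :=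
        mul_le_mul_right stepB _
    _ = ENNReal.ofReal (vs * C) * ∫⁻ s in Icc (0:ℝ) t, ENNReal.ofReal (|g s| ^ p) := by
        rw [stepC, ← mul_assoc, ← ENNReal.ofReal_mul hC0, mul_comm C vs]
    _ = ENNReal.ofReal (vs * Real.exp (p * ℓ * ks / ν)) *
        ∫⁻ s in Set.Icc (0:ℝ) t, ENNReal.ofReal (|g s| ^ p) := by rw [hCdef]
end

section
/- Let ℓ > 0, 0 < ν ≤ v*, k* ≥ 0, and let v, k : ℝ → ℝ be measurable with ν ≤ v(x) ≤ v* and |k(x)| ≤ k* for a.e. x ∈ [0, ℓ]. Define τ(x) := ∫₀ˣ 1/v(s) ds and ξ(x) := ∫₀ˣ k(s)/v(s) ds; since τ is strictly increasing and continuous on [0, ℓ] with τ(0) = 0, for each t ∈ [0, τ(ℓ)] let π(t) denote the unique point of [0, ℓ] with τ(π(t)) = τ(ℓ) − t. Then for every real p ≥ 1 and every measurable f : ℝ → ℝ: ∫₀^{τ(ℓ)} e^{p ξ(π(t))} |f(π(t))|^p dt ≤ (1/ν) · e^{p ℓ k*/ν} · ∫₀^ℓ |f(x)|^p dx (the integrals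 being Lebesgue integrals of nonnegative measurable functions, with values in [0, ∞]). -/
/-!
Since `ν ≤ v`, the travel time `τ` is strictly increasing and `(1/ν)`-Lipschitz on `[0, ℓ]`.
Hence `π` is antitone (so measurable), and it has the `(1/ν)`-Lipschitz left inverse
`x ↦ τ ℓ - τ x`. A Lipschitz map enlarges Lebesgue measure (the one-dimensional Hausdorff
measure) at most by its constant, so the push-forward of `dt` on `[0, τ ℓ]` under `π` is at most
`(1/ν) dx` on `[0, ℓ]`. The weight is bounded by `|ξ| ≤ ℓ k*/ν`, from `|k/v| ≤ k*/ν`.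
-/

open MeasureTheory Set
open scoped ENNReal NNReal Interval

theorem LipschitzOnWith.const_sub {α E : Type*} [PseudoMetricSpace α] [SeminormedAddCommGroup E]
    {K : ℝ≥0} {f : α → E} {s : Set α} (hf : LipschitzOnWith K f s) (c : E) :
    LipschitzOnWith K (fun x => c - f x) s :=
  LipschitzOnWith.of_dist_le_mul fun x hx y hy => by
    rw [dist_sub_left]; exact hf.dist_le_mul x hx y hy

section ChangeOfVariables

variable {X Y : Type*} [EMetricSpace X] [MeasurableSpace X] [BorelSpace X]
  [EMetricSpace Y] [MeasurableSpace Y] [BorelSpace Y]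

theorem map_restrict_hausdorffMeasure_le_of_leftInvOn {g : Y → X} {π : X → Y} {S : Set X}
    {s : Set Y} {K : ℝ≥0} {d : ℝ} (hd : 0 ≤ d) (hg : LipschitzOnWith K g s)
    (hS : MeasurableSet S) (hπ : AEMeasurable π (μH[d].restrict S)) (hmaps : MapsTo π S s)
    (hinv : LeftInvOn g π S) :
    Measure.map π (μH[d].restrict S) ≤ ((K : ℝ≥0∞) ^ d) • μH[d].restrict s := by
  refine Measure.le_iff.2 fun A hA => ?_
  rw [Measure.map_apply_of_aemeasurable hπ hA, Measure.restrict_apply' hS, Measure.smul_apply,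
    Measure.restrict_apply hA, smul_eq_mul]
  have hsub : π ⁻¹' A ∩ S ⊆ g '' (A ∩ s) := fun t ⟨htA, htS⟩ =>
    ⟨π t, ⟨htA, hmaps htS⟩, hinv htS⟩
  calc μH[d] (π ⁻¹' A ∩ S) ≤ μH[d] (g '' (A ∩ s)) := measure_mono hsub
    _ ≤ (K : ℝ≥0∞) ^ d * μH[d] (A ∩ s) :=
      (hg.mono inter_subset_right).hausdorffMeasure_image_le hd

theorem setLIntegral_comp_le_of_leftInvOn {g π : ℝ → ℝ} {S s : Set ℝ} {K : ℝ≥0}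
    (hg : LipschitzOnWith K g s) (hS : MeasurableSet S) (hπ : AEMeasurable π (volume.restrict S))
    (hmaps : MapsTo π S s) (hinv : LeftInvOn g π S) {h : ℝ → ℝ≥0∞} (hh : Measurable h) :
    ∫⁻ t in S, h (π t) ≤ K * ∫⁻ x in s, h x := by
  have hmap : Measure.map π (volume.restrict S) ≤ (K : ℝ≥0∞) • volume.restrict s := by
    rw [← hausdorffMeasure_real] at hπ ⊢
    simpa only [ENNReal.rpow_one] using
      map_restrict_hausdorffMeasure_le_of_leftInvOn zero_le_one hg hS hπ hmaps hinv
  calc ∫⁻ t in S, h (π t) = ∫⁻ x, h x ∂Measure.map π (volume.restrict S) :=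
        (lintegral_map' hh.aemeasurable hπ).symm
    _ ≤ ∫⁻ x, h x ∂((K : ℝ≥0∞) • volume.restrict s) := lintegral_mono' hmap le_rfl
    _ = K * ∫⁻ x in s, h x := lintegral_smul_measure _ _

end ChangeOfVariables

section Primitive

variable {a b : ℝ}

theorem MeasureTheory.IntegrableOn.intervalIntegrable_of_mem {E : Type*} [NormedAddCommGroup E]
    {w : ℝ → E} (hw : IntegrableOn w (Icc a b)) {x y : ℝ} (hx : x ∈ Icc a b) (hy : y ∈ Icc a b) :
    IntervalIntegrable w volume x y :=
  (hw.mono_set (uIcc_subset_Icc hx hy)).intervalIntegrable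

theorem ae_uIoc_of_ae_restrict_Icc {P : ℝ → Prop} {x y : ℝ}
    (h : ∀ᵐ s ∂volume.restrict (Icc a b), P s) (hx : x ∈ Icc a b) (hy : y ∈ Icc a b) :
    ∀ᵐ s, s ∈ Ι x y → P s := by
  filter_upwards [(ae_restrict_iff' measurableSet_Icc).1 h] with s hs hsxy
  exact hs (uIcc_subset_Icc hx hy (uIoc_subset_uIcc hsxy))

theorem lipschitzOnWith_primitive {E : Type*} [NormedAddCommGroup E] [NormedSpace ℝ E]
    {w : ℝ → E} {C : ℝ≥0} (hw : IntegrableOn w (Icc a b))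
    (hC : ∀ᵐ s ∂volume.restrict (Icc a b), ‖w s‖ ≤ C) :
    LipschitzOnWith C (fun x => ∫ s in a..x, w s) (Icc a b) := by
  refine LipschitzOnWith.of_dist_le_mul fun x hx y hy => ?_
  have ha : a ∈ Icc a b := left_mem_Icc.2 (hx.1.trans hx.2)
  rw [dist_eq_norm, intervalIntegral.integral_interval_sub_left
      (hw.intervalIntegrable_of_mem ha hx) (hw.intervalIntegrable_of_mem ha hy),
    Real.dist_eq]
  exact intervalIntegral.norm_integral_le_of_norm_le_const_ae (ae_uIoc_of_ae_restrict_Icc hC hy hx)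

theorem intervalIntegral_pos_of_ae_pos {w : ℝ → ℝ} (hab : a < b)
    (hw : IntervalIntegrable w volume a b) (hpos : ∀ᵐ s ∂volume.restrict (Ioc a b), 0 < w s) :
    0 < ∫ s in a..b, w s := by
  have hlt : volume.restrict (Ioc a b) {s | 0 < w s} ≠ 0 := by
    rw [measure_congr (ae_eq_univ.2 hpos), Measure.restrict_apply_univ, Real.volume_Ioc]
    exact ENNReal.ofReal_ne_zero_iff.2 (sub_pos.2 hab)
  simpa using intervalIntegral.integral_lt_integral_of_ae_le_of_measure_setOfPred_lt_ne_zero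
    hab.le intervalIntegrable_const hw (hpos.mono fun s hs => hs.le) hlt

theorem strictMonoOn_primitive {w : ℝ → ℝ} (hw : IntegrableOn w (Icc a b))
    (hpos : ∀ᵐ s ∂volume.restrict (Icc a b), 0 < w s) :
    StrictMonoOn (fun x => ∫ s in a..x, w s) (Icc a b) := by
  intro x hx y hy hxy
  have ha : a ∈ Icc a b := left_mem_Icc.2 (hx.1.trans hx.2)
  rw [← sub_pos, intervalIntegral.integral_interval_sub_left
    (hw.intervalIntegrable_of_mem ha hy) (hw.intervalIntegrable_of_mem ha hx)]
  exact intervalIntegral_pos_of_ae_pos hxy (hw.intervalIntegrable_of_mem hx hy)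
    (ae_restrict_of_ae_restrict_of_subset (Ioc_subset_Icc_self.trans (Icc_subset_Icc hx.1 hy.2))
      hpos)

theorem norm_primitive_le {E : Type*} [NormedAddCommGroup E] [NormedSpace ℝ E] {w : ℝ → E}
    {C : ℝ} (hC₀ : 0 ≤ C) (hC : ∀ᵐ s ∂volume.restrict (Icc a b), ‖w s‖ ≤ C) {x : ℝ}
    (hx : x ∈ Icc a b) : ‖∫ s in a..x, w s‖ ≤ C * (b - a) :=
  calc ‖∫ s in a..x, w s‖ ≤ C * |x - a| := intervalIntegral.norm_integral_le_of_norm_le_const_ae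
        (ae_uIoc_of_ae_restrict_Icc hC (left_mem_Icc.2 (hx.1.trans hx.2)) hx)
    _ ≤ C * (b - a) := by
      rw [abs_of_nonneg (sub_nonneg.2 hx.1)]
      exact mul_le_mul_of_nonneg_left (sub_le_sub_right hx.2 a) hC₀

end Primitive

section TravelTime

variable {a b ν : ℝ} {v : ℝ → ℝ}

theorem ae_one_div_pos_and_norm_le (hν : 0 < ν)
    (hvb : ∀ᵐ x ∂volume.restrict (Icc a b), ν ≤ v x) :
    ∀ᵐ x ∂volume.restrict (Icc a b), 0 < 1 / v x ∧ ‖1 / v x‖ ≤ (1 / ν).toNNReal := by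
  filter_upwards [hvb] with x hx
  have hvx : 0 < v x := hν.trans_le hx
  rw [Real.coe_toNNReal _ (one_div_pos.2 hν).le, Real.norm_of_nonneg (one_div_pos.2 hvx).le]
  exact ⟨one_div_pos.2 hvx, one_div_le_one_div_of_le hν hx⟩

theorem integrableOn_one_div (hv : Measurable v) (hν : 0 < ν)
    (hvb : ∀ᵐ x ∂volume.restrict (Icc a b), ν ≤ v x) :
    IntegrableOn (fun x => 1 / v x) (Icc a b) :=
  Measure.integrableOn_of_bounded (by simp) (hv.const_div 1).aestronglyMeasurable
    ((ae_one_div_pos_and_norm_le hν hvb).mono fun _ hx => hx.2)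

theorem strictMonoOn_integral_one_div (hv : Measurable v) (hν : 0 < ν)
    (hvb : ∀ᵐ x ∂volume.restrict (Icc a b), ν ≤ v x) :
    StrictMonoOn (fun x => ∫ s in a..x, 1 / v s) (Icc a b) :=
  strictMonoOn_primitive (integrableOn_one_div hv hν hvb)
    ((ae_one_div_pos_and_norm_le hν hvb).mono fun _ hx => hx.1)

theorem lipschitzOnWith_integral_one_div (hv : Measurable v) (hν : 0 < ν)
    (hvb : ∀ᵐ x ∂volume.restrict (Icc a b), ν ≤ v x) :
    LipschitzOnWith (1 / ν).toNNReal (fun x => ∫ s in a..x, 1 / v s) (Icc a b) :=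
  lipschitzOnWith_primitive (integrableOn_one_div hv hν hvb)
    ((ae_one_div_pos_and_norm_le hν hvb).mono fun _ hx => hx.2)

theorem integral_div_le_of_abs_le {k : ℝ → ℝ} {ks : ℝ} (hν : 0 < ν) (hks : 0 ≤ ks)
    (hvb : ∀ᵐ x ∂volume.restrict (Icc a b), ν ≤ v x)
    (hkb : ∀ᵐ x ∂volume.restrict (Icc a b), |k x| ≤ ks) {x : ℝ} (hx : x ∈ Icc a b) :
    ∫ s in a..x, k s / v s ≤ ks / ν * (b - a) := by
  refine (Real.le_norm_self _).trans (norm_primitive_le (div_nonneg hks hν.le) ?_ hx)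
  filter_upwards [hvb, hkb] with s hvs hks_s
  rw [norm_div, Real.norm_eq_abs, Real.norm_of_nonneg (hν.trans_le hvs).le]
  exact div_le_div₀ hks hks_s hν hvs

end TravelTime

theorem antitoneOn_of_strictMonoOn_comp_eq_sub {τ π : ℝ → ℝ} {s S : Set ℝ} {c : ℝ}
    (hτ : StrictMonoOn τ s) (hπ : ∀ t ∈ S, π t ∈ s ∧ τ (π t) = c - t) : AntitoneOn π S := by
  intro t₁ h₁ t₂ h₂ h₁₂
  rw [← hτ.le_iff_le (hπ t₂ h₂).1 (hπ t₁ h₁).1, (hπ t₁ h₁).2, (hπ t₂ h₂).2]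
  linarith

theorem stmt_10_general (ℓ ν vs ks : ℝ) (hν : 0 < ν) (hks : 0 ≤ ks)
    (v k : ℝ → ℝ) (hv : Measurable v)
    (hvb : ∀ᵐ x ∂(volume.restrict (Set.Icc 0 ℓ)), ν ≤ v x ∧ v x ≤ vs)
    (hkb : ∀ᵐ x ∂(volume.restrict (Set.Icc 0 ℓ)), |k x| ≤ ks)
    (τ ξ : ℝ → ℝ)
    (hτ : ∀ x : ℝ, τ x = ∫ s in (0 : ℝ)..x, 1 / v s)
    (hξ : ∀ x : ℝ, ξ x = ∫ s in (0 : ℝ)..x, k s / v s)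
    (π : ℝ → ℝ)
    (hπ : ∀ t ∈ Set.Icc (0 : ℝ) (τ ℓ), π t ∈ Set.Icc (0 : ℝ) ℓ ∧ τ (π t) = τ ℓ - t)
    (p : ℝ) (hp : 1 ≤ p) (f : ℝ → ℝ) (hf : Measurable f) :
    ∫⁻ t in Set.Icc (0 : ℝ) (τ ℓ),
        ENNReal.ofReal (Real.exp (p * ξ (π t)) * |f (π t)| ^ p)
      ≤ ENNReal.ofReal ((1 / ν) * Real.exp (p * ℓ * ks / ν)) *
        ∫⁻ x in Set.Icc (0 : ℝ) ℓ, ENNReal.ofReal (|f x| ^ p) := by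
  have hνv := hvb.mono fun _ hx => hx.1
  have hτ_mono : StrictMonoOn τ (Icc 0 ℓ) := by
    rw [funext hτ]; exact strictMonoOn_integral_one_div hv hν hνv
  have hτ_lip : LipschitzOnWith (1 / ν).toNNReal τ (Icc 0 ℓ) := by
    rw [funext hτ]; exact lipschitzOnWith_integral_one_div hv hν hνv
  have hweight : ∀ x ∈ Icc 0 ℓ, p * ξ x ≤ p * ℓ * ks / ν := fun x hx =>
    calc p * ξ x ≤ p * (ks / ν * (ℓ - 0)) :=
          mul_le_mul_of_nonneg_left (hξ x ▸ integral_div_le_of_abs_le hν hks hνv hkb hx)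
            (by linarith)
      _ = p * ℓ * ks / ν := by ring
  have hcov : ∫⁻ t in Icc 0 (τ ℓ), ENNReal.ofReal (|f (π t)| ^ p)
      ≤ ENNReal.ofReal (1 / ν) * ∫⁻ x in Icc 0 ℓ, ENNReal.ofReal (|f x| ^ p) :=
    setLIntegral_comp_le_of_leftInvOn (hτ_lip.const_sub (τ ℓ)) measurableSet_Icc
      (aemeasurable_restrict_of_antitoneOn measurableSet_Icc
        (antitoneOn_of_strictMonoOn_comp_eq_sub hτ_mono hπ))
      (fun t ht => (hπ t ht).1) (fun t ht => by simp only [(hπ t ht).2, sub_sub_cancel])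
      (by fun_prop)
  calc ∫⁻ t in Icc 0 (τ ℓ), ENNReal.ofReal (Real.exp (p * ξ (π t)) * |f (π t)| ^ p)
      ≤ ∫⁻ t in Icc 0 (τ ℓ),
          ENNReal.ofReal (Real.exp (p * ℓ * ks / ν)) * ENNReal.ofReal (|f (π t)| ^ p) := by
        refine setLIntegral_mono' measurableSet_Icc fun t ht => ?_
        rw [← ENNReal.ofReal_mul (Real.exp_nonneg _)]
        gcongr
        exact hweight _ (hπ t ht).1
    _ = ENNReal.ofReal (Real.exp (p * ℓ * ks / ν)) *
          ∫⁻ t in Icc 0 (τ ℓ), ENNReal.ofReal (|f (π t)| ^ p) :=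
        lintegral_const_mul' _ _ ENNReal.ofReal_ne_top
    _ ≤ ENNReal.ofReal (Real.exp (p * ℓ * ks / ν)) *
          (ENNReal.ofReal (1 / ν) * ∫⁻ x in Icc 0 ℓ, ENNReal.ofReal (|f x| ^ p)) := by
        gcongr
    _ = _ := by rw [← mul_assoc, ← ENNReal.ofReal_mul (Real.exp_nonneg _), mul_comm (Real.exp _)]

/-- With `τ x = ∫₀ˣ 1/v`, `ξ x = ∫₀ˣ k/v`, `ν ≤ v ≤ v*` and `|k| ≤ k*` a.e.
on `[0, ℓ]`, and `π : [0, τ(ℓ)] → [0, ℓ]` the backward characteristic defined by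
`τ (π t) = τ ℓ - t`, for every `p ≥ 1` and measurable `f`:
`∫₀^{τ(ℓ)} e^{pξ(π t)} |f(π t)|^p dt ≤ (1/ν) e^{pℓk*/ν} ∫₀^ℓ |f|^p`. -/
theorem stmt_10 (ℓ ν vs ks : ℝ) (hℓ : 0 < ℓ) (hν : 0 < ν) (hνvs : ν ≤ vs) (hks : 0 ≤ ks)
    (v k : ℝ → ℝ) (hv : Measurable v) (hk : Measurable k)
    (hvb : ∀ᵐ x ∂(volume.restrict (Set.Icc 0 ℓ)), ν ≤ v x ∧ v x ≤ vs)
    (hkb : ∀ᵐ x ∂(volume.restrict (Set.Icc 0 ℓ)), |k x| ≤ ks)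
    (τ ξ : ℝ → ℝ)
    (hτ : ∀ x : ℝ, τ x = ∫ s in (0 : ℝ)..x, 1 / v s)
    (hξ : ∀ x : ℝ, ξ x = ∫ s in (0 : ℝ)..x, k s / v s)
    (π : ℝ → ℝ)
    (hπ : ∀ t ∈ Set.Icc (0 : ℝ) (τ ℓ), π t ∈ Set.Icc (0 : ℝ) ℓ ∧ τ (π t) = τ ℓ - t)
    (p : ℝ) (hp : 1 ≤ p) (f : ℝ → ℝ) (hf : Measurable f) :
    ∫⁻ t in Set.Icc (0 : ℝ) (τ ℓ),
        ENNReal.ofReal (Real.exp (p * ξ (π t)) * |f (π t)| ^ p)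
      ≤ ENNReal.ofReal ((1 / ν) * Real.exp (p * ℓ * ks / ν)) *
        ∫⁻ x in Set.Icc (0 : ℝ) ℓ, ENNReal.ofReal (|f x| ^ p) :=
  stmt_10_general ℓ ν vs ks hν hks v k hv hvb hkb τ ξ hτ hξ π hπ p hp f hf
end

section
/- Let r > 0, let μ be a finite Borel measure on ℝ with μ(ℝ \ [−r, 0]) = 0, let p ≥ 1 be a real number, let φ : ℝ → ℝ be measurable, and let α > 0. Then ∫₀^{α} ( ∫_{θ ∈ [−r,0]} |φ(t + θ)| · 1_{t + θ ≤ 0} dμ(θ) )^p dt ≤ μ([−r, 0])^p · ∫_{[−r,0]} |φ(s)|^p ds, where all integrals are Lebesgue integrals of nonnegative measurable functions with values in [0, ∞]. -/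
open MeasureTheory Set
open scoped ENNReal

/-! Hölder's inequality against the constant `1` bounds, for each `t`, the `p`-th power of the
inner integral by `μ([-r, 0])^(p-1)` times the integral of `|φ(t + θ)|^p 1_{t+θ ≤ 0}`. After
swapping the integrals by Tonelli, for fixed `θ ≥ -r` the truncated shift `t ↦ t + θ` (with
`t ≥ 0`, `t + θ ≤ 0`) lands in `[-r, 0]`, so by translation invariance of Lebesgue measure
the `t`-integral is at most `∫_{[-r,0]} |φ|^p`; integrating in `θ` gives one more factor
`μ([-r, 0])`. -/

theorem lintegral_rpow_le_measure_univ_rpow_mul {X : Type*} [MeasurableSpace X] {ν : Measure X}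
    {f : X → ℝ≥0∞} (hf : AEMeasurable f ν) {p : ℝ} (hp : 1 ≤ p) :
    (∫⁻ x, f x ∂ν) ^ p ≤ ν univ ^ (p - 1) * ∫⁻ x, f x ^ p ∂ν := by
  rcases hp.eq_or_lt with rfl | hp1
  · simp
  have hp0 : 0 < p := one_pos.trans hp1
  have holder := ENNReal.lintegral_mul_le_Lp_mul_Lq ν (Real.HolderConjugate.conjExponent hp1)
    hf (aemeasurable_const (b := (1 : ℝ≥0∞)))
  simp only [Pi.mul_apply, mul_one, ENNReal.one_rpow, lintegral_const, one_mul] at holder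
  calc (∫⁻ x, f x ∂ν) ^ p
      ≤ ((∫⁻ x, f x ^ p ∂ν) ^ (1 / p) * ν univ ^ (1 / p.conjExponent)) ^ p := by gcongr
    _ = ν univ ^ (p - 1) * ∫⁻ x, f x ^ p ∂ν := by
      rw [ENNReal.mul_rpow_of_nonneg _ _ hp0.le, ← ENNReal.rpow_mul, ← ENNReal.rpow_mul,
        one_div_mul_cancel hp0.ne', ENNReal.rpow_one, mul_comm, Real.conjExponent, one_div_div,
        div_mul_cancel₀ _ hp0.ne']

theorem setLIntegral_comp_add_truncated_le {F : ℝ → ℝ≥0∞} {r α θ : ℝ} (hθ : -r ≤ θ) :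
    ∫⁻ t in Icc 0 α, F (t + θ) * (if t + θ ≤ 0 then 1 else 0) ≤ ∫⁻ s in Icc (-r) 0, F s := by
  have hle : ∀ t ∈ Icc 0 α,
      F (t + θ) * (if t + θ ≤ 0 then 1 else 0) ≤ (Icc (-r) 0).indicator F (t + θ) := by
    rintro t ⟨ht, -⟩
    split_ifs with h
    · rw [mul_one, indicator_of_mem (show t + θ ∈ Icc (-r) 0 from ⟨by linarith, h⟩)]
    · rw [mul_zero]
      exact zero_le
  calc _ ≤ ∫⁻ t in Icc 0 α, (Icc (-r) 0).indicator F (t + θ) :=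
        setLIntegral_mono' measurableSet_Icc hle
    _ ≤ ∫⁻ t, (Icc (-r) 0).indicator F (t + θ) := setLIntegral_le_lintegral _ _
    _ = ∫⁻ s in Icc (-r) 0, F s := by
        rw [lintegral_add_right_eq_self, lintegral_indicator measurableSet_Icc]

theorem ofReal_abs_mul_ite_rpow (x : ℝ) (c : Prop) [Decidable c] {p : ℝ} (hp : 0 < p) :
    (ENNReal.ofReal |x| * if c then 1 else 0) ^ p =
      ENNReal.ofReal (|x| ^ p) * if c then 1 else 0 := by
  split_ifs
  · rw [mul_one, mul_one, ENNReal.ofReal_rpow_of_nonneg (abs_nonneg x) hp.le]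
  · rw [mul_zero, mul_zero, ENNReal.zero_rpow_of_pos hp]

theorem stmt_15_general (r : ℝ) (μ : Measure ℝ) [IsFiniteMeasure μ]
    (p : ℝ) (hp : 1 ≤ p) (φ : ℝ → ℝ) (hφ : Measurable φ) (α : ℝ) :
    ∫⁻ t in Set.Icc (0 : ℝ) α,
        (∫⁻ θ in Set.Icc (-r) 0,
          ENNReal.ofReal (|φ (t + θ)|) * (if t + θ ≤ 0 then 1 else 0) ∂μ) ^ p
      ≤ (μ (Set.Icc (-r) 0)) ^ p *
        ∫⁻ s in Set.Icc (-r) (0 : ℝ), ENNReal.ofReal (|φ s| ^ p) := by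
  set S := Icc (-r) (0 : ℝ)
  set G : ℝ → ℝ → ℝ≥0∞ := fun t θ =>
    ENNReal.ofReal |φ (t + θ)| * if t + θ ≤ 0 then 1 else 0
  have hG : Measurable (Function.uncurry G) := by
    refine (ENNReal.measurable_ofReal.comp (hφ.comp measurable_add).abs).mul ?_
    exact Measurable.ite (measurableSet_le measurable_add measurable_const)
      measurable_const measurable_const
  have hGp : Measurable (Function.uncurry fun t θ => G t θ ^ p) := hG.pow_const p
  calc ∫⁻ t in Icc 0 α, (∫⁻ θ in S, G t θ ∂μ) ^ p
      ≤ ∫⁻ t in Icc 0 α, μ S ^ (p - 1) * ∫⁻ θ in S, G t θ ^ p ∂μ := by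
        refine lintegral_mono fun t => ?_
        simpa only [Measure.restrict_apply_univ] using
          lintegral_rpow_le_measure_univ_rpow_mul (ν := μ.restrict S)
            hG.of_uncurry_left.aemeasurable hp
    _ = μ S ^ (p - 1) * ∫⁻ θ in S, ∫⁻ t in Icc 0 α, G t θ ^ p ∂volume ∂μ := by
        rw [lintegral_const_mul _ hGp.lintegral_prod_right,
          lintegral_lintegral_swap hGp.aemeasurable]
    _ ≤ μ S ^ (p - 1) * ∫⁻ _ in S, (∫⁻ s in S, ENNReal.ofReal (|φ s| ^ p)) ∂μ := by
        gcongr 1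
        refine setLIntegral_mono' measurableSet_Icc fun θ hθ => ?_
        simpa only [G, ofReal_abs_mul_ite_rpow _ _ (one_pos.trans_le hp)] using
          setLIntegral_comp_add_truncated_le hθ.1
    _ = μ S ^ p * ∫⁻ s in S, ENNReal.ofReal (|φ s| ^ p) := by
        have hpow : μ S ^ (p - 1) * μ S = μ S ^ p := by
          simpa only [ENNReal.rpow_one, sub_add_cancel] using
            (ENNReal.rpow_add_of_nonneg (x := μ S) (p - 1) 1 (sub_nonneg.2 hp) zero_le_one).symm
        rw [setLIntegral_const, mul_comm _ (μ S), ← mul_assoc, hpow]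

/-- Let `μ` be a finite Borel measure on `ℝ` concentrated on `[-r, 0]`,
`p ≥ 1`, `φ` measurable, `α > 0`. Then
`∫₀^α (∫_{[-r,0]} |φ(t+θ)| 1_{t+θ≤0} dμ(θ))^p dt ≤ μ([-r,0])^p ∫_{[-r,0]} |φ|^p`. -/
theorem stmt_15 (r : ℝ) (hr : 0 < r) (μ : Measure ℝ) [IsFiniteMeasure μ]
    (hμ : μ (Set.Icc (-r) 0)ᶜ = 0)
    (p : ℝ) (hp : 1 ≤ p) (φ : ℝ → ℝ) (hφ : Measurable φ) (α : ℝ) (hα : 0 < α) :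
    ∫⁻ t in Set.Icc (0 : ℝ) α,
        (∫⁻ θ in Set.Icc (-r) 0,
          ENNReal.ofReal (|φ (t + θ)|) * (if t + θ ≤ 0 then 1 else 0) ∂μ) ^ p
      ≤ (μ (Set.Icc (-r) 0)) ^ p *
        ∫⁻ s in Set.Icc (-r) (0 : ℝ), ENNReal.ofReal (|φ s| ^ p) :=
  stmt_15_general r μ p hp φ hφ α
end
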